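/- arXiv:2302.00922 — 5 statements merged into one kernel-verified Lean document; each statement's English description precedes it below -/
import Mathlib

section
/- Let C ∈ ℂ^{R×S×N₃} satisfy C_{ijk} = F_{ij} G_{ik} H_{jk} for some matrices F ∈ ℂ^{R×S}, G ∈ ℂ^{R×N₃}, H ∈ ℂ^{S×N₃}. Then for all indices i, p ∈ {1,…,R}, j, q ∈ {1,…,S}, and k, r ∈ {1,…,N₃}, the implicit equation C_{ijk} C_{pqk} C_{iqr} C_{pjr} − C_{iqk} C_{pjk} C_{ijr} C_{pqr} = 0 holds. -/
/-- Any core tensor `C_{ijk} = F_{ij} G_{ik} H_{jk}` satisfies the implicit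
equations `C_{ijk} C_{pqk} C_{iqr} C_{pjr} − C_{iqk} C_{pjk} C_{ijr} C_{pqr} = 0`. -/
theorem paratuck2_core_implicit_equations
    {R S N₃ : ℕ}
    (F : Matrix (Fin R) (Fin S) ℂ) (G : Matrix (Fin R) (Fin N₃) ℂ)
    (H : Matrix (Fin S) (Fin N₃) ℂ)
    (C : Fin R → Fin S → Fin N₃ → ℂ)
    (hC : ∀ i j k, C i j k = F i j * G i k * H j k) :
    ∀ (i p : Fin R) (j q : Fin S) (k r : Fin N₃),
      C i j k * C p q k * C i q r * C p j r - C i q k * C p j k * C i j r * C p q r = 0 := by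
  intro i p j q k r
  simp only [hC]
  ring
end

section
/- Let C ∈ ℂ^{2×2×N₃} satisfy C_{ijk} = F_{ij} G_{ik} H_{jk} for some F ∈ ℂ^{2×2}, G ∈ ℂ^{2×N₃}, H ∈ ℂ^{2×N₃}. Then the 2×N₃ matrix Ψ(C) factors as Ψ(C) = (F₁₁F₂₂, F₂₁F₁₂)ᵀ · (g₁, …, g_{N₃}) where g_k = G_{1k} G_{2k} H_{1k} H_{2k}; in particular rank Ψ(C) ≤ 1. -/
/-- If `C_{ijk} = F_{ij} G_{ik} H_{jk}` for a `2×2×N₃` tensor, the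
structured matrix `Ψ(C)` factors as `(F₁₁F₂₂, F₂₁F₁₂)ᵀ (g₁, …, g_{N₃})` with
`g_k = G_{1k} G_{2k} H_{1k} H_{2k}`; in particular `rank Ψ(C) ≤ 1`. -/
theorem paratuck2_Psi_factorization
    {N₃ : ℕ}
    (F : Matrix (Fin 2) (Fin 2) ℂ) (G H : Matrix (Fin 2) (Fin N₃) ℂ)
    (C : Fin 2 → Fin 2 → Fin N₃ → ℂ)
    (hC : ∀ i j k, C i j k = F i j * G i k * H j k)
    (Ψ : Matrix (Fin 2) (Fin N₃) ℂ)
    (hΨ : ∀ k, Ψ 0 k = C 0 0 k * C 1 1 k ∧ Ψ 1 k = C 1 0 k * C 0 1 k) :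
    Ψ = Matrix.vecMulVec ![F 0 0 * F 1 1, F 1 0 * F 0 1]
        (fun k => G 0 k * G 1 k * H 0 k * H 1 k) ∧
      Ψ.rank ≤ 1 := by
  have heq : Ψ = Matrix.vecMulVec ![F 0 0 * F 1 1, F 1 0 * F 0 1]
      (fun k => G 0 k * G 1 k * H 0 k * H 1 k) := by
    ext i k
    fin_cases i
    · have := (hΨ k).1
      simp [this, hC, Matrix.vecMulVec]
      ring
    · have := (hΨ k).2
      simp [this, hC, Matrix.vecMulVec]
      ring
  refine ⟨heq, ?_⟩
  rw [heq]
  rw [Matrix.vecMulVec_eq (Fin 1)]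
  refine le_trans (Matrix.rank_mul_le_left _ _) ?_
  exact le_trans (Matrix.rank_le_card_width _) (by simp)
end

section
/- Let T ∈ ℂ^{2×2×N₃}, let ã₁, ã₂, b̃₁, b̃₂ ∈ ℂ², and let C ∈ ℂ^{2×2×N₃} have slices C_{:,:,k} = [[ã₁ᵀ T_k b̃₁, ã₁ᵀ T_k b̃₂],[ã₂ᵀ T_k b̃₁, ã₂ᵀ T_k b̃₂]] where T_k = T_{:,:,k}. Then Ψ(C) = Θ · Φ(T), where Θ ∈ ℂ^{2×10} is the matrix whose rows are θ(ã₁ b̃₁ᵀ, ã₂ b̃₂ᵀ)ᵀ and θ(ã₂ b̃₁ᵀ, ã₁ b̃₂ᵀ)ᵀ, and Φ(T) ∈ ℂ^{10×N₃} is the matrix whose k-th column is φ(T_k). -/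
open Matrix

/-- The Veronese embedding `φ : ℂ^{2×2} → ℂ¹⁰`, with `T = [[t₁,t₃],[t₂,t₄]]`,
i.e. `t₁ = T₀₀, t₂ = T₁₀, t₃ = T₀₁, t₄ = T₁₁`. -/
noncomputable def veroneseEmb (T : Matrix (Fin 2) (Fin 2) ℂ) : Fin 10 → ℂ :=
  ![T 0 0 ^ 2, T 1 0 ^ 2, T 0 1 ^ 2, T 1 1 ^ 2,
    T 0 0 * T 1 0, T 0 0 * T 0 1, T 0 0 * T 1 1,
    T 1 0 * T 0 1, T 1 0 * T 1 1, T 0 1 * T 1 1]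

/-- The bilinear map `θ : ℂ^{2×2} × ℂ^{2×2} → ℂ¹⁰`. -/
noncomputable def thetaMap (U V : Matrix (Fin 2) (Fin 2) ℂ) : Fin 10 → ℂ :=
  ![U 0 0 * V 0 0, U 1 0 * V 1 0, U 0 1 * V 0 1, U 1 1 * V 1 1,
    U 0 0 * V 1 0 + U 1 0 * V 0 0, U 0 0 * V 0 1 + U 0 1 * V 0 0,
    U 0 0 * V 1 1 + U 1 1 * V 0 0, U 1 0 * V 0 1 + U 0 1 * V 1 0,
    U 1 0 * V 1 1 + U 1 1 * V 1 0, U 0 1 * V 1 1 + U 1 1 * V 0 1]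

/-- If the slices of `C` are obtained from the slices `T_k` of `T` via
`C_{:,:,k} = [[a1ᵀ T_k b1, a1ᵀ T_k b2],[a2ᵀ T_k b1, a2ᵀ T_k b2]]`, then
`Ψ(C) = Θ · Φ(T)` where the rows of `Θ ∈ ℂ^{2×10}` are `θ(a1b1ᵀ, a2b2ᵀ)ᵀ` and
`θ(a2b1ᵀ, a1b2ᵀ)ᵀ`, and the columns of `Φ(T) ∈ ℂ^{10×N₃}` are `φ(T_k)`. -/
theorem paratuck2_Psi_eq_Theta_mul_Phi
    {N₃ : ℕ} (T : Fin N₃ → Matrix (Fin 2) (Fin 2) ℂ)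
    (a1 a2 b1 b2 : Fin 2 → ℂ)
    (C : Fin 2 → Fin 2 → Fin N₃ → ℂ)
    (hC : ∀ k, C 0 0 k = a1 ⬝ᵥ (T k).mulVec b1 ∧ C 0 1 k = a1 ⬝ᵥ (T k).mulVec b2 ∧
                C 1 0 k = a2 ⬝ᵥ (T k).mulVec b1 ∧ C 1 1 k = a2 ⬝ᵥ (T k).mulVec b2)
    (Ψ : Matrix (Fin 2) (Fin N₃) ℂ)
    (hΨ : ∀ k, Ψ 0 k = C 0 0 k * C 1 1 k ∧ Ψ 1 k = C 1 0 k * C 0 1 k)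
    (Θ : Matrix (Fin 2) (Fin 10) ℂ)
    (hΘ : Θ = Matrix.of ![thetaMap (vecMulVec a1 b1) (vecMulVec a2 b2),
                          thetaMap (vecMulVec a2 b1) (vecMulVec a1 b2)])
    (Φ : Matrix (Fin 10) (Fin N₃) ℂ)
    (hΦ : ∀ i k, Φ i k = veroneseEmb (T k) i) :
    Ψ = Θ * Φ := by
  ext i k
  obtain ⟨h1, h2, h3, h4⟩ := hC k
  obtain ⟨p1, p2⟩ := hΨ k
  have key : ∀ j, Φ j k = veroneseEmb (T k) j := fun j => hΦ j k
  subst hΘ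
  rw [Matrix.mul_apply]
  fin_cases i <;>
    simp only [p1, p2, h1, h2, h3, h4, Fin.sum_univ_succ, Fin.sum_univ_zero, key,
      dotProduct, Matrix.mulVec, Fin.sum_univ_two, veroneseEmb, thetaMap,
      vecMulVec_apply, Matrix.of_apply, Matrix.cons_val', Matrix.cons_val_zero,
      Matrix.cons_val_one, Matrix.head_cons, Matrix.empty_val', Matrix.cons_val_fin_one,
      Matrix.head_fin_const, Fin.isValue, Matrix.cons_val_succ, Fin.mk_zero, Fin.mk_one, Fin.succ_zero_eq_one] <;> ring
end

section
/- Let T ∈ ℂ^{2×2×N₃} admit a rank-(2,2) ParaTuck-2 decomposition T_{:,:,k} = A D_k(G) F D_k(H) Bᵀ with A, B ∈ ℂ^{2×2} invertible, and write Ã = A⁻¹ with rows ã₁ᵀ, ã₂ᵀ and B̃ = B⁻¹ with rows b̃₁ᵀ, b̃₂ᵀ. If the two vectors θ(ã₁ b̃₁ᵀ, ã₂ b̃₂ᵀ) and θ(ã₂ b̃₁ᵀ, ã₁ b̃₂ᵀ) in ℂ¹⁰ are linearly independent, then the 10×N₃ matrix Φ(T) with columns φ(T_{:,:,k}) satisfies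 rank Φ(T) ≤ 9; moreover there exists a nonzero vector ϑ ∈ ℂ¹⁰ with ϑᵀ Φ(T) = 0. -/
open Matrix

/-- Dotting `θ(U,V)` with `φ(W)` factors as a product of two linear forms. -/
lemma theta_dot_veronese (U V W : Matrix (Fin 2) (Fin 2) ℂ) :
    ∑ i, thetaMap U V i * veroneseEmb W i =
      (∑ p, ∑ q, U p q * W p q) * (∑ p, ∑ q, V p q * W p q) := by
  simp [thetaMap, veroneseEmb, Fin.sum_univ_succ]
  ring

/-- A nonzero left-kernel vector bounds the rank by 9. -/
lemma rank_le_nine_of_left_kernel {N₃ : ℕ} (Φ : Matrix (Fin 10) (Fin N₃) ℂ)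
    (ϑ : Fin 10 → ℂ) (hϑ : ϑ ≠ 0) (h : ϑ ᵥ* Φ = 0) : Φ.rank ≤ 9 := by
  rw [← Matrix.rank_transpose Φ]
  have hker : ϑ ∈ LinearMap.ker Φᵀ.mulVecLin := by
    simp [Matrix.mulVecLin_apply, Matrix.mulVec_transpose, h]
  have hpos : 0 < Module.finrank ℂ (LinearMap.ker Φᵀ.mulVecLin) := by
    rw [Module.finrank_pos_iff]
    exact ⟨⟨ϑ, hker⟩, 0, by simpa using hϑ⟩
  have hsum := LinearMap.finrank_range_add_finrank_ker Φᵀ.mulVecLin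
  have h10 : Module.finrank ℂ (Fin 10 → ℂ) = 10 := by simp
  rw [h10] at hsum
  rw [Matrix.rank]
  omega

/-- If `T ∈ ℂ^{2×2×N₃}` admits a rank-(2,2) ParaTuck-2 decomposition
`T_{:,:,k} = A D_k(G) F D_k(H) Bᵀ` with `A, B` invertible (rows of `A⁻¹` being `a1ᵀ, a2ᵀ`
and rows of `B⁻¹` being `b1ᵀ, b2ᵀ`), and the two vectors `θ(a1 b1ᵀ, a2 b2ᵀ)` and
`θ(a2 b1ᵀ, a1 b2ᵀ)` are linearly independent, then `rank Φ(T) ≤ 9` and there exists a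
nonzero `ϑ ∈ ℂ¹⁰` with `ϑᵀ Φ(T) = 0`. -/
theorem paratuck2_Phi_rank_le_nine
    {N₃ : ℕ} (T : Fin N₃ → Matrix (Fin 2) (Fin 2) ℂ)
    (A B F : Matrix (Fin 2) (Fin 2) ℂ) (G H : Matrix (Fin 2) (Fin N₃) ℂ)
    (hA : IsUnit A) (hB : IsUnit B)
    (hT : ∀ k, T k = A * Matrix.diagonal (fun i => G i k) * F
        * Matrix.diagonal (fun j => H j k) * B.transpose)
    (a1 a2 b1 b2 : Fin 2 → ℂ)
    (ha1 : a1 = A⁻¹ 0) (ha2 : a2 = A⁻¹ 1)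
    (hb1 : b1 = B⁻¹ 0) (hb2 : b2 = B⁻¹ 1)
    (hind : LinearIndependent ℂ ![thetaMap (vecMulVec a1 b1) (vecMulVec a2 b2),
                                  thetaMap (vecMulVec a2 b1) (vecMulVec a1 b2)])
    (Φ : Matrix (Fin 10) (Fin N₃) ℂ)
    (hΦ : ∀ i k, Φ i k = veroneseEmb (T k) i) :
    Φ.rank ≤ 9 ∧ ∃ ϑ : Fin 10 → ℂ, ϑ ≠ 0 ∧ ϑ ᵥ* Φ = 0 := by
  have hAdet : IsUnit A.det := (Matrix.isUnit_iff_isUnit_det A).mp hA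
  have hBdet : IsUnit B.det := (Matrix.isUnit_iff_isUnit_det B).mp hB
  -- M_k = A⁻¹ * T k * (B⁻¹)ᵀ equals the diagonal sandwich
  have hM : ∀ k, A⁻¹ * T k * (B⁻¹)ᵀ
      = Matrix.diagonal (fun i => G i k) * F * Matrix.diagonal (fun j => H j k) := by
    intro k
    rw [hT k]
    have h2 : Bᵀ * (B⁻¹)ᵀ = 1 := by
      rw [← Matrix.transpose_mul, Matrix.nonsing_inv_mul B hBdet, Matrix.transpose_one]
    simp only [Matrix.mul_assoc]
    rw [← Matrix.mul_assoc A⁻¹ A, Matrix.nonsing_inv_mul A hAdet, Matrix.one_mul, h2,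
      Matrix.mul_one]
  -- entrywise form
  have hS : ∀ (i j : Fin 2) (k : Fin N₃),
      (∑ p, ∑ q, vecMulVec (A⁻¹ i) (B⁻¹ j) p q * T k p q) = G i k * F i j * H j k := by
    intro i j k
    have h : (A⁻¹ * T k * (B⁻¹)ᵀ) i j = G i k * F i j * H j k := by
      rw [hM k, Matrix.mul_assoc, Matrix.diagonal_mul, Matrix.mul_diagonal]
      ring
    rw [← h]
    simp only [Matrix.mul_apply, Matrix.transpose_apply, Fin.sum_univ_two, vecMulVec_apply]
    ring
  -- dot products of the two θ-vectors with each column of Φ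
  have hdot1 : ∀ k, ∑ i, thetaMap (vecMulVec a1 b1) (vecMulVec a2 b2) i * veroneseEmb (T k) i
      = (G 0 k * F 0 0 * H 0 k) * (G 1 k * F 1 1 * H 1 k) := by
    intro k
    rw [theta_dot_veronese, ha1, hb1, ha2, hb2, hS 0 0 k, hS 1 1 k]
  have hdot2 : ∀ k, ∑ i, thetaMap (vecMulVec a2 b1) (vecMulVec a1 b2) i * veroneseEmb (T k) i
      = (G 1 k * F 1 0 * H 0 k) * (G 0 k * F 0 1 * H 1 k) := by
    intro k
    rw [theta_dot_veronese, ha2, hb1, ha1, hb2, hS 1 0 k, hS 0 1 k]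
  have key : ∃ ϑ : Fin 10 → ℂ, ϑ ≠ 0 ∧ ϑ ᵥ* Φ = 0 := by
    by_cases hf : F 0 1 * F 1 0 = 0
    · refine ⟨thetaMap (vecMulVec a2 b1) (vecMulVec a1 b2),
        by simpa using hind.ne_zero 1, ?_⟩
      funext k
      simp only [Matrix.vecMul, dotProduct, Pi.zero_apply, hΦ]
      rw [hdot2 k]
      linear_combination (G 1 k * H 0 k * G 0 k * H 1 k) * hf
    · refine ⟨fun i => (F 0 1 * F 1 0) * thetaMap (vecMulVec a1 b1) (vecMulVec a2 b2) i
          - (F 0 0 * F 1 1) * thetaMap (vecMulVec a2 b1) (vecMulVec a1 b2) i, ?_, ?_⟩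
      · intro h0
        refine hf (LinearIndependent.pair_iff.mp hind (F 0 1 * F 1 0) (-(F 0 0 * F 1 1)) ?_).1
        funext i
        have h := congrFun h0 i
        simp only [Pi.zero_apply] at h
        simp only [Pi.add_apply, Pi.smul_apply, smul_eq_mul, Pi.zero_apply]
        linear_combination h
      · funext k
        simp only [Matrix.vecMul, dotProduct, Pi.zero_apply, hΦ]
        have expand : ∑ i, ((F 0 1 * F 1 0) * thetaMap (vecMulVec a1 b1) (vecMulVec a2 b2) i
              - (F 0 0 * F 1 1) * thetaMap (vecMulVec a2 b1) (vecMulVec a1 b2) i)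
                * veroneseEmb (T k) i
            = (F 0 1 * F 1 0) * ∑ i, thetaMap (vecMulVec a1 b1) (vecMulVec a2 b2) i
                * veroneseEmb (T k) i
              - (F 0 0 * F 1 1) * ∑ i, thetaMap (vecMulVec a2 b1) (vecMulVec a1 b2) i
                * veroneseEmb (T k) i := by
          rw [Finset.mul_sum, Finset.mul_sum, ← Finset.sum_sub_distrib]
          exact Finset.sum_congr rfl fun i _ => by ring
        rw [expand, hdot1 k, hdot2 k]
        ring
  obtain ⟨ϑ, hϑ, hz⟩ := key
  exact ⟨rank_le_nine_of_left_kernel Φ ϑ hϑ hz, ϑ, hϑ, hz⟩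
end

section
/- Let α₁, α₂, β₁, β₂ ∈ ℂ, let σ ∈ ℂ be nonzero, and suppose u ∈ ℂ³, v ∈ ℂ³ satisfy σ · u · vᵀ = (α₁α₂, −(α₁+α₂), 1)ᵀ · (β₁β₂, −(β₁+β₂), 1). Then u₃ ≠ 0 and v₃ ≠ 0, the polynomial u₁ + u₂ t + u₃ t² factors as u₃ (t − α₁)(t − α₂), and the polynomial v₁ + v₂ t + v₃ t² factors as v₃ (t − β₁)(t − β₂); in particular the roots of these quadratics are exactly {α₁, α₂} and {β₁, β₂} respectively. -/
open Matrix

/-- If `σ ≠ 0` and `σ u vᵀ = (α₁α₂, −(α₁+α₂), 1)ᵀ (β₁β₂, −(β₁+β₂), 1)`,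
then `u₃ ≠ 0`, `v₃ ≠ 0`, the quadratic `u₁ + u₂ t + u₃ t²` factors as
`u₃ (t − α₁)(t − α₂)`, the quadratic `v₁ + v₂ t + v₃ t²` factors as
`v₃ (t − β₁)(t − β₂)`, and the roots of these quadratics are exactly `{α₁, α₂}`
and `{β₁, β₂}` respectively. -/
theorem recover_roots_from_rank_one_decomposition
    (α₁ α₂ β₁ β₂ σ : ℂ) (hσ : σ ≠ 0)
    (u v : Fin 3 → ℂ)
    (h : σ • vecMulVec u v
        = vecMulVec ![α₁ * α₂, -(α₁ + α₂), 1] ![β₁ * β₂, -(β₁ + β₂), 1]) :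
    u 2 ≠ 0 ∧ v 2 ≠ 0 ∧
      (∀ t : ℂ, u 0 + u 1 * t + u 2 * t ^ 2 = u 2 * ((t - α₁) * (t - α₂))) ∧
      (∀ t : ℂ, v 0 + v 1 * t + v 2 * t ^ 2 = v 2 * ((t - β₁) * (t - β₂))) ∧
      (∀ t : ℂ, u 0 + u 1 * t + u 2 * t ^ 2 = 0 ↔ t = α₁ ∨ t = α₂) ∧
      (∀ t : ℂ, v 0 + v 1 * t + v 2 * t ^ 2 = 0 ↔ t = β₁ ∨ t = β₂) := by
  have e : ∀ i j : Fin 3, σ * (u i * v j)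
      = ![α₁ * α₂, -(α₁ + α₂), 1] i * ![β₁ * β₂, -(β₁ + β₂), 1] j := by
    intro i j
    have := congrFun (congrFun h i) j
    simpa [vecMulVec_apply] using this
  have h22 : σ * (u 2 * v 2) = 1 := by simpa using e 2 2
  have hu2 : u 2 ≠ 0 := by
    intro h0; rw [h0] at h22; simp at h22
  have hv2 : v 2 ≠ 0 := by
    intro h0; rw [h0] at h22; simp at h22
  have h02 : σ * (u 0 * v 2) = α₁ * α₂ := by simpa using e 0 2
  have h12 : σ * (u 1 * v 2) = -(α₁ + α₂) := by simpa using e 1 2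
  have h20 : σ * (u 2 * v 0) = β₁ * β₂ := by simpa using e 2 0
  have h21 : σ * (u 2 * v 1) = -(β₁ + β₂) := by simpa using e 2 1
  have hu0 : u 0 = u 2 * (α₁ * α₂) := by
    linear_combination u 2 * h02 - u 0 * h22
  have hu1 : u 1 = u 2 * (-(α₁ + α₂)) := by
    linear_combination u 2 * h12 - u 1 * h22
  have hv0 : v 0 = v 2 * (β₁ * β₂) := by
    linear_combination v 2 * h20 - v 0 * h22
  have hv1 : v 1 = v 2 * (-(β₁ + β₂)) := by
    linear_combination v 2 * h21 - v 1 * h22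
  have hfu : ∀ t : ℂ, u 0 + u 1 * t + u 2 * t ^ 2 = u 2 * ((t - α₁) * (t - α₂)) := by
    intro t; rw [hu0, hu1]; ring
  have hfv : ∀ t : ℂ, v 0 + v 1 * t + v 2 * t ^ 2 = v 2 * ((t - β₁) * (t - β₂)) := by
    intro t; rw [hv0, hv1]; ring
  refine ⟨hu2, hv2, hfu, hfv, ?_, ?_⟩
  · intro t
    rw [hfu t]
    constructor
    · intro ht
      rcases mul_eq_zero.mp ht with h' | h'
      · exact absurd h' hu2
      · rcases mul_eq_zero.mp h' with h'' | h''
        · exact Or.inl (sub_eq_zero.mp h'')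
        · exact Or.inr (sub_eq_zero.mp h'')
    · rintro (rfl | rfl) <;> ring
  · intro t
    rw [hfv t]
    constructor
    · intro ht
      rcases mul_eq_zero.mp ht with h' | h'
      · exact absurd h' hv2
      · rcases mul_eq_zero.mp h' with h'' | h''
        · exact Or.inl (sub_eq_zero.mp h'')
        · exact Or.inr (sub_eq_zero.mp h'')
    · rintro (rfl | rfl) <;> ring
end
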